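/- Let V : ℝ³ → ℝ be continuous with V(λx) = λ^s V(x) for all λ > 0 and some s > 2, and V(x) > 0 for |x| = 1. For every g > 0 and Ω ≥ 0, the Thomas–Fermi functional 𝓔^TF_{g,Ω} attains its infimum over the admissible class at ρ^TF_{g,Ω}(x) = (1/(2g)) · max( μ + (Ω²/4) r(x)² − V(x), 0 ), where μ ∈ ℝ is the unique real number for which ∫_{ℝ³} ρ^TF_{g,Ω} = 1; this minimizer is unique up to sets of Lebesgue measure zero. -/

import Mathlib

/-!
With the effective potential `W = V - (Ω²/4) r²` the integrand is `W ρ + g ρ²`, and for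
`ρ_μ = [μ - W]₊ / (2g)` the pointwise identity
`(W a + g a²) - (W b + g b²) - μ (a - b) - g (a - b)² = (a - b) (W - μ + 2 g b) ≥ 0`
(`a ≥ 0`, `b = ρ_μ`) integrates, for admissible `ρ` of the same mass, to
`E(ρ) ≥ E(ρ_μ) + g ‖ρ - ρ_μ‖₂²`, which gives minimality and a.e. uniqueness at once.

Homogeneity of degree `s > 2` makes `W` coercive (`V ≥ c |x|^s` and `r ≤ |x|`), so every
`ρ_μ` is continuous with compact support. The mass `μ ↦ ∫ ρ_μ` is then continuous, vanishes
at `min W` and tends to infinity, and two different `μ` cannot give the same positive mass,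
so the normalizing `μ` exists and is unique.
-/
open MeasureTheory Filter Topology

noncomputable section

/-- Three-dimensional Euclidean space. -/
abbrev E3 := EuclideanSpace ℝ (Fin 3)

/-- The distance `r(x) = √(x₁² + x₂²)` from `x` to the `x₃`-axis. -/
def rax (x : E3) : ℝ := Real.sqrt (x 0 ^ 2 + x 1 ^ 2)

/-- The integrand of the 3D Thomas–Fermi functional:
`V ρ − (Ω²/4) r² ρ + g ρ²`. -/
def tfIntegrand (V : E3 → ℝ) (g Ω : ℝ) (ρ : E3 → ℝ) (x : E3) : ℝ :=
  V x * ρ x - Ω ^ 2 / 4 * rax x ^ 2 * ρ x + g * ρ x ^ 2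

/-- Admissible densities for the 3D Thomas–Fermi problem: measurable, nonnegative,
in `L¹ ∩ L²`, with finite potential terms and unit mass. -/
def tfAdmissible (V : E3 → ℝ) (ρ : E3 → ℝ) : Prop :=
  Measurable ρ ∧ (∀ x, 0 ≤ ρ x) ∧ Integrable ρ ∧ Integrable (fun x => ρ x ^ 2) ∧
    Integrable (fun x => V x * ρ x) ∧ Integrable (fun x => rax x ^ 2 * ρ x) ∧
    (∫ x, ρ x) = 1

/-- The 3D Thomas–Fermi energy `E^TF_{g,Ω}`. -/
def ETF (V : E3 → ℝ) (g Ω : ℝ) : ℝ :=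
  sInf { e | ∃ ρ : E3 → ℝ, tfAdmissible V ρ ∧ e = ∫ x, tfIntegrand V g Ω ρ x }

/-- The candidate Thomas–Fermi minimizer with chemical potential `μ`:
`ρ^TF_{g,Ω}(x) = (1/(2g)) [μ + (Ω²/4) r(x)² − V(x)]₊`. -/
def rhoTF (V : E3 → ℝ) (g Ω μ : ℝ) (x : E3) : ℝ :=
  1 / (2 * g) * max (μ + Ω ^ 2 / 4 * rax x ^ 2 - V x) 0

/-- Homogeneity of degree `s`: `V(λx) = λ^s V(x)` for all `λ > 0`. -/
def Homogeneous (V : E3 → ℝ) (s : ℝ) : Prop :=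
  ∀ lam : ℝ, 0 < lam → ∀ x : E3, V (lam • x) = lam ^ s * V x

/-- The effective potential `W(x) = V(x) − (1/4) r(x)²`. -/
def Wpot (V : E3 → ℝ) (x : E3) : ℝ := V x - 1 / 4 * rax x ^ 2

section Profile

variable {X : Type*} [TopologicalSpace X] {w : X → ℝ}

lemma isCompact_setOf_le_of_tendsto_cocompact (hw : Continuous w)
    (hcoer : Tendsto w (cocompact X) atTop) (c : ℝ) : IsCompact {x | w x ≤ c} := by
  obtain ⟨K, hK, hKc⟩ := mem_cocompact.1 (hcoer.eventually_gt_atTop c)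
  refine hK.of_isClosed_subset (isClosed_le hw continuous_const) fun x (hx : w x ≤ c) => ?_
  by_contra hxK
  exact not_le.2 (hKc hxK) hx

lemma hasCompactSupport_max_sub (hw : Continuous w) (hcoer : Tendsto w (cocompact X) atTop)
    (μ : ℝ) : HasCompactSupport fun x => max (μ - w x) 0 :=
  HasCompactSupport.intro' (isCompact_setOf_le_of_tendsto_cocompact hw hcoer μ)
    (isClosed_le hw continuous_const) fun x hx => max_eq_right (by simp at hx; linarith)

variable [MeasurableSpace X] [OpensMeasurableSpace X] (m : Measure X) [IsFiniteMeasureOnCompacts m]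

lemma integrable_max_sub (hw : Continuous w) (hcoer : Tendsto w (cocompact X) atTop) (μ : ℝ) :
    Integrable (fun x => max (μ - w x) 0) m :=
  (by fun_prop : Continuous fun x => max (μ - w x) 0).integrable_of_hasCompactSupport
    (hasCompactSupport_max_sub hw hcoer μ)

lemma continuous_integral_max_sub (hw : Continuous w) (hcoer : Tendsto w (cocompact X) atTop) :
    Continuous fun μ => ∫ x, max (μ - w x) 0 ∂m := by
  refine continuous_iff_continuousAt.2 fun μ₀ => continuousAt_of_dominated
    (bound := fun x => max (μ₀ + 1 - w x) 0) (Eventually.of_forall fun μ =>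
      (integrable_max_sub m hw hcoer μ).aestronglyMeasurable) ?_
    (integrable_max_sub m hw hcoer _) (Eventually.of_forall fun x => by fun_prop)
  filter_upwards [Iio_mem_nhds (lt_add_one μ₀)] with μ hμ
  refine Eventually.of_forall fun x => ?_
  rw [Real.norm_of_nonneg (le_max_right _ _)]
  exact max_le_max (by linarith [Set.mem_Iio.1 hμ]) le_rfl

lemma exists_integral_max_sub_eq [Nonempty X] [m.IsOpenPosMeasure] (hw : Continuous w)
    (hcoer : Tendsto w (cocompact X) atTop) {c : ℝ} (hc : 0 ≤ c) :
    ∃ μ, ∫ x, max (μ - w x) 0 ∂m = c := by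
  obtain ⟨x₀, hx₀⟩ := hw.exists_forall_le hcoer
  set S := {x | w x ≤ w x₀ + 1}
  have hS : IsCompact S := isCompact_setOf_le_of_tendsto_cocompact hw hcoer _
  have hS_pos : 0 < m.real S := by
    refine ENNReal.toReal_pos (ne_of_gt ?_) hS.measure_lt_top.ne
    refine ((isOpen_lt hw continuous_const).measure_pos m ⟨x₀, ?_⟩).trans_le
      (measure_mono fun x (hx : w x < _) => hx.le)
    simp
  have hlower : ∀ μ, m.real S * (μ - (w x₀ + 1)) ≤ ∫ x, max (μ - w x) 0 ∂m := fun μ =>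
    calc m.real S * (μ - (w x₀ + 1))
        ≤ ∫ x in S, max (μ - w x) 0 ∂m :=
          setIntegral_ge_of_const_le (isClosed_le hw continuous_const).measurableSet
            hS.measure_lt_top.ne (fun x hx => le_max_of_le_left (by simp [S] at hx; linarith))
            (integrable_max_sub m hw hcoer μ).integrableOn
      _ ≤ ∫ x, max (μ - w x) 0 ∂m := setIntegral_le_integral
          (integrable_max_sub m hw hcoer μ) (Eventually.of_forall fun _ => le_max_right _ _)
  have htendsto : Tendsto (fun μ => ∫ x, max (μ - w x) 0 ∂m) atTop atTop :=
    tendsto_atTop_mono hlower <| Tendsto.const_mul_atTop hS_pos <|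
      tendsto_atTop_add_const_right _ _ tendsto_id
  have hzero : ∫ x, max (w x₀ - w x) 0 ∂m = 0 := by
    simp [max_eq_right (sub_nonpos.2 (hx₀ _))]
  obtain ⟨μ, -, hμ⟩ := intermediate_value_Ici
    (continuous_integral_max_sub m hw hcoer).continuousOn htendsto
    (show c ∈ Set.Ici (∫ x, max (w x₀ - w x) 0 ∂m) by rw [hzero]; exact hc)
  exact ⟨μ, hμ⟩

end Profile

section Variational

variable {α : Type*} [MeasurableSpace α] {m : Measure α} {w : α → ℝ}

lemma le_of_integral_max_sub_le {μ₁ μ₂ : ℝ}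
    (h₁ : Integrable (fun x => max (μ₁ - w x) 0) m)
    (h₂ : Integrable (fun x => max (μ₂ - w x) 0) m)
    (hle : ∫ x, max (μ₂ - w x) 0 ∂m ≤ ∫ x, max (μ₁ - w x) 0 ∂m)
    (hne : ∫ x, max (μ₂ - w x) 0 ∂m ≠ 0) : μ₂ ≤ μ₁ := by
  by_contra! hlt
  have hmono : ∀ x, max (μ₁ - w x) 0 ≤ max (μ₂ - w x) 0 := fun x =>
    max_le_max (by linarith) le_rfl
  have hae : (fun x => max (μ₂ - w x) 0 - max (μ₁ - w x) 0) =ᵐ[m] 0 := by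
    refine (integral_eq_zero_iff_of_nonneg (fun x => sub_nonneg.2 (hmono x)) (h₂.sub h₁)).1 ?_
    rw [integral_sub h₂ h₁]
    linarith [integral_mono h₁ h₂ hmono]
  refine hne (integral_eq_zero_of_ae ?_)
  filter_upwards [hae] with x hx
  rw [Pi.zero_apply, sub_eq_zero] at hx
  rcases le_or_gt (μ₂ - w x) 0 with h | h
  · exact max_eq_right h
  · exact absurd hx (ne_of_gt ((max_lt (by linarith) h).trans_le (le_max_left _ _)))

lemma mul_sub_add_mul_sq_le {g μ w a b : ℝ} (hg : 0 < g) (ha : 0 ≤ a)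
    (hb : 2 * g * b = max (μ - w) 0) :
    μ * (a - b) + g * (a - b) ^ 2 ≤ (w * a + g * a ^ 2) - (w * b + g * b ^ 2) := by
  suffices 0 ≤ (a - b) * (w - μ + 2 * g * b) by linarith
  rcases le_or_gt (μ - w) 0 with h | h
  · have hb0 : b = 0 := by
      rw [max_eq_right h] at hb
      exact (mul_eq_zero.1 hb).resolve_left (by positivity)
    rw [hb0, mul_zero, add_zero, sub_zero]
    exact mul_nonneg ha (by linarith)
  · rw [hb, max_eq_left h.le, sub_add_sub_cancel', sub_self, mul_zero]

lemma integral_add_mul_integral_sq_le {g μ : ℝ} {ρ T : α → ℝ} (hg : 0 < g)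
    (hρ_nonneg : ∀ x, 0 ≤ ρ x)
    (hT : ∀ x, 2 * g * T x = max (μ - w x) 0) (hρ : Integrable ρ m) (hT_int : Integrable T m)
    (hEρ : Integrable (fun x => w x * ρ x + g * ρ x ^ 2) m)
    (hET : Integrable (fun x => w x * T x + g * T x ^ 2) m)
    (hsq : Integrable (fun x => (ρ x - T x) ^ 2) m) (hmass : ∫ x, ρ x ∂m = ∫ x, T x ∂m) :
    ∫ x, (w x * T x + g * T x ^ 2) ∂m + g * ∫ x, (ρ x - T x) ^ 2 ∂m
      ≤ ∫ x, (w x * ρ x + g * ρ x ^ 2) ∂m := by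
  have hdiff : Integrable (fun x => ρ x - T x) m := hρ.sub hT_int
  have h : ∫ x, (μ * (ρ x - T x) + g * (ρ x - T x) ^ 2) ∂m
      ≤ ∫ x, ((w x * ρ x + g * ρ x ^ 2) - (w x * T x + g * T x ^ 2)) ∂m :=
    integral_mono ((hdiff.const_mul μ).add (hsq.const_mul g)) (hEρ.sub hET)
      fun x => mul_sub_add_mul_sq_le hg (hρ_nonneg x) (hT x)
  rw [integral_add (hdiff.const_mul μ) (hsq.const_mul g), integral_const_mul,
    integral_const_mul, integral_sub hρ hT_int, hmass, sub_self, mul_zero, zero_add,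
    integral_sub hEρ hET] at h
  linarith

lemma ae_eq_of_integral_sub_sq_eq_zero {f g : α → ℝ}
    (hsq : Integrable (fun x => (f x - g x) ^ 2) m) (h : ∫ x, (f x - g x) ^ 2 ∂m = 0) :
    f =ᵐ[m] g := by
  filter_upwards [(integral_eq_zero_iff_of_nonneg (fun x => sq_nonneg _) hsq).1 h] with x hx
  exact sub_eq_zero.1 (pow_eq_zero_iff two_ne_zero |>.1 hx)

end Variational

lemma exists_pos_mul_norm_rpow_le {E : Type*} [NormedAddCommGroup E] [NormedSpace ℝ E]
    [ProperSpace E] [Nontrivial E] {V : E → ℝ} {s : ℝ} (hVc : Continuous V) (hs : 0 < s)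
    (hhom : ∀ lam : ℝ, 0 < lam → ∀ x, V (lam • x) = lam ^ s * V x)
    (hVpos : ∀ x, ‖x‖ = 1 → 0 < V x) :
    ∃ c > 0, ∀ x, c * ‖x‖ ^ s ≤ V x := by
  obtain ⟨x₀, hx₀, hmin⟩ := (isCompact_sphere (0 : E) 1).exists_isMinOn
    (NormedSpace.sphere_nonempty.2 zero_le_one) hVc.continuousOn
  refine ⟨V x₀, hVpos x₀ (by simpa using hx₀), fun x => ?_⟩
  rcases eq_or_ne x 0 with rfl | hx
  · have h2 : V 0 = 2 ^ s * V 0 := by simpa using hhom 2 two_pos 0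
    have hV0 : V 0 = 0 := by
      have : (1 : ℝ) < 2 ^ s := Real.one_lt_rpow one_lt_two hs
      nlinarith
    rw [hV0, norm_zero, Real.zero_rpow hs.ne', mul_zero]
  · have hxn : 0 < ‖x‖ := norm_pos_iff.2 hx
    have hu : ‖x‖⁻¹ • x ∈ Metric.sphere (0 : E) 1 := by
      simp [norm_smul, hxn.ne']
    calc V x₀ * ‖x‖ ^ s ≤ V (‖x‖⁻¹ • x) * ‖x‖ ^ s := by gcongr; exact hmin hu
      _ = V x := by
        rw [mul_comm, ← hhom _ hxn, smul_smul, mul_inv_cancel₀ hxn.ne', one_smul]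

lemma tendsto_mul_rpow_sub_mul_sq_atTop {c s : ℝ} (a : ℝ) (hc : 0 < c) (hs : 2 < s) :
    Tendsto (fun t : ℝ => c * t ^ s - a * t ^ 2) atTop atTop := by
  have h : Tendsto (fun t : ℝ => t ^ 2 * (c * t ^ (s - 2) - a)) atTop atTop :=
    (tendsto_pow_atTop two_ne_zero).atTop_mul_atTop₀ <| tendsto_atTop_add_const_right _ _ <|
      (tendsto_rpow_atTop (by linarith)).const_mul_atTop hc
  refine h.congr' ((eventually_gt_atTop 0).mono fun t ht => ?_)
  have hts : t ^ s = t ^ 2 * t ^ (s - 2) := by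
    rw [← Real.rpow_natCast, ← Real.rpow_add ht]
    norm_num
  simp only [hts]
  ring

lemma continuous_rax : Continuous rax := by
  unfold rax
  fun_prop

lemma rax_sq_le_norm_sq (x : E3) : rax x ^ 2 ≤ ‖x‖ ^ 2 := by
  rw [rax, Real.sq_sqrt (by positivity), EuclideanSpace.norm_sq_eq, Fin.sum_univ_three]
  simp only [Real.norm_eq_abs, sq_abs]
  nlinarith [sq_nonneg (x 2)]

def effPot (V : E3 → ℝ) (Ω : ℝ) (x : E3) : ℝ := V x - Ω ^ 2 / 4 * rax x ^ 2

section ThomasFermi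

variable {V : E3 → ℝ} {g Ω μ : ℝ}

lemma continuous_effPot (hVc : Continuous V) : Continuous (effPot V Ω) :=
  hVc.sub (continuous_const.mul (continuous_rax.pow 2))

lemma tendsto_effPot_cocompact (hVc : Continuous V) {s : ℝ} (hs : 2 < s)
    (hhom : Homogeneous V s) (hVpos : ∀ x : E3, ‖x‖ = 1 → 0 < V x) :
    Tendsto (effPot V Ω) (cocompact E3) atTop := by
  obtain ⟨c, hc, hV⟩ := exists_pos_mul_norm_rpow_le hVc (by linarith) hhom hVpos
  refine tendsto_atTop_mono (fun x => ?_) <|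
    (tendsto_mul_rpow_sub_mul_sq_atTop (Ω ^ 2 / 4) hc hs).comp tendsto_norm_cocompact_atTop
  have := rax_sq_le_norm_sq x
  simp only [Function.comp_apply, effPot]
  nlinarith [hV x, sq_nonneg Ω]

lemma tfIntegrand_eq (ρ : E3 → ℝ) (x : E3) :
    tfIntegrand V g Ω ρ x = effPot V Ω x * ρ x + g * ρ x ^ 2 := by
  rw [tfIntegrand, effPot]
  ring

lemma rhoTF_eq_mul_max : rhoTF V g Ω μ = fun x => 1 / (2 * g) * max (μ - effPot V Ω x) 0 := by
  ext x
  rw [rhoTF, effPot, sub_sub_eq_add_sub]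

lemma two_mul_mul_rhoTF (hg : 0 < g) (x : E3) :
    2 * g * rhoTF V g Ω μ x = max (μ - effPot V Ω x) 0 := by
  rw [rhoTF_eq_mul_max]
  field_simp

lemma integral_rhoTF :
    ∫ x, rhoTF V g Ω μ x = 1 / (2 * g) * ∫ x, max (μ - effPot V Ω x) 0 := by
  rw [rhoTF_eq_mul_max, integral_const_mul]

lemma continuous_rhoTF (hVc : Continuous V) : Continuous (rhoTF V g Ω μ) := by
  have := continuous_effPot (Ω := Ω) hVc
  rw [rhoTF_eq_mul_max]
  fun_prop

lemma hasCompactSupport_rhoTF (hVc : Continuous V)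
    (hcoer : Tendsto (effPot V Ω) (cocompact E3) atTop) : HasCompactSupport (rhoTF V g Ω μ) := by
  rw [rhoTF_eq_mul_max]
  exact (hasCompactSupport_max_sub (continuous_effPot hVc) hcoer μ).mul_left

lemma integrable_mul_rhoTF (hVc : Continuous V)
    (hcoer : Tendsto (effPot V Ω) (cocompact E3) atTop) {f : E3 → ℝ} (hf : Continuous f) :
    Integrable (fun x => f x * rhoTF V g Ω μ x) :=
  (hf.mul (continuous_rhoTF hVc)).integrable_of_hasCompactSupport
    (hasCompactSupport_rhoTF hVc hcoer).mul_left

lemma rhoTF_admissible (hVc : Continuous V) (hcoer : Tendsto (effPot V Ω) (cocompact E3) atTop)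
    (hg : 0 < g) (hμ : ∫ x, rhoTF V g Ω μ x = 1) : tfAdmissible V (rhoTF V g Ω μ) :=
  ⟨(continuous_rhoTF hVc).measurable,
    fun x => mul_nonneg (by positivity) (le_max_right _ _),
    (continuous_rhoTF hVc).integrable_of_hasCompactSupport (hasCompactSupport_rhoTF hVc hcoer),
    by simpa only [sq] using integrable_mul_rhoTF hVc hcoer (continuous_rhoTF hVc),
    integrable_mul_rhoTF hVc hcoer hVc,
    integrable_mul_rhoTF hVc hcoer (continuous_rax.pow 2), hμ⟩

lemma existsUnique_integral_rhoTF_eq_one (hVc : Continuous V)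
    (hcoer : Tendsto (effPot V Ω) (cocompact E3) atTop) (hg : 0 < g) :
    ∃! μ : ℝ, ∫ x, rhoTF V g Ω μ x = 1 := by
  have hne : 2 * g ≠ 0 := by positivity
  have hnorm (μ : ℝ) :
      ∫ x, rhoTF V g Ω μ x = 1 ↔ ∫ x, max (μ - effPot V Ω x) 0 = 2 * g := by
    rw [integral_rhoTF, one_div_mul_eq_div, div_eq_one_iff_eq hne]
  have hint := integrable_max_sub volume (continuous_effPot hVc) hcoer
  simp only [hnorm]
  obtain ⟨μ, hμ⟩ := exists_integral_max_sub_eq volume (continuous_effPot hVc) hcoer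
    (by positivity : 0 ≤ 2 * g)
  refine ⟨μ, hμ, fun ν hν => le_antisymm ?_ ?_⟩
  · exact le_of_integral_max_sub_le (hint μ) (hint ν) (hν.trans hμ.symm).le (hν ▸ hne)
  · exact le_of_integral_max_sub_le (hint ν) (hint μ) (hμ.trans hν.symm).le (hμ ▸ hne)

lemma tfAdmissible.memLp_two {ρ : E3 → ℝ} (hρ : tfAdmissible V ρ) : MemLp ρ 2 :=
  (memLp_two_iff_integrable_sq hρ.1.aestronglyMeasurable).2 hρ.2.2.2.1

lemma tfAdmissible.integrable_tfIntegrand {ρ : E3 → ℝ} (hρ : tfAdmissible V ρ) (g Ω : ℝ) :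
    Integrable (fun x => effPot V Ω x * ρ x + g * ρ x ^ 2) := by
  obtain ⟨-, -, -, hsq, hVρ, hrρ, -⟩ := hρ
  refine ((hVρ.sub (hrρ.const_mul (Ω ^ 2 / 4))).add (hsq.const_mul g)).congr
    (Eventually.of_forall fun x => ?_)
  simp only [Pi.add_apply, Pi.sub_apply, effPot]
  ring

lemma integral_tfIntegrand_add_sq_le (hVc : Continuous V)
    (hcoer : Tendsto (effPot V Ω) (cocompact E3) atTop) (hg : 0 < g)
    (hμ : ∫ x, rhoTF V g Ω μ x = 1) {ρ : E3 → ℝ} (hρ : tfAdmissible V ρ) :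
    (∫ x, tfIntegrand V g Ω (rhoTF V g Ω μ) x) + g * ∫ x, (ρ x - rhoTF V g Ω μ x) ^ 2
      ≤ ∫ x, tfIntegrand V g Ω ρ x := by
  have hT := rhoTF_admissible hVc hcoer hg hμ
  simp only [tfIntegrand_eq]
  exact integral_add_mul_integral_sq_le hg hρ.2.1 (two_mul_mul_rhoTF hg) hρ.2.2.1 hT.2.2.1
    (hρ.integrable_tfIntegrand g Ω) (hT.integrable_tfIntegrand g Ω)
    (hρ.memLp_two.sub hT.memLp_two).integrable_sq (hρ.2.2.2.2.2.2.trans hμ.symm)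

end ThomasFermi

theorem tf3_minimizer_general (V : E3 → ℝ) (hVc : Continuous V) (s : ℝ) (hs : 2 < s)
    (hhom : Homogeneous V s) (hVpos : ∀ x : E3, ‖x‖ = 1 → 0 < V x)
    (g Ω : ℝ) (hg : 0 < g) :
    (∃! μ : ℝ, (∫ x, rhoTF V g Ω μ x) = 1) ∧
    ∀ μ : ℝ, (∫ x, rhoTF V g Ω μ x) = 1 →
      tfAdmissible V (rhoTF V g Ω μ) ∧
      (∫ x, tfIntegrand V g Ω (rhoTF V g Ω μ) x) = ETF V g Ω ∧
      ∀ ρ : E3 → ℝ, tfAdmissible V ρ →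
        (∫ x, tfIntegrand V g Ω ρ x) = ETF V g Ω →
          ∀ᵐ x : E3, ρ x = rhoTF V g Ω μ x := by
  have hcoer := tendsto_effPot_cocompact (Ω := Ω) hVc hs hhom hVpos
  refine ⟨existsUnique_integral_rhoTF_eq_one hVc hcoer hg, fun μ hμ => ?_⟩
  set T := rhoTF V g Ω μ
  have hT := rhoTF_admissible hVc hcoer hg hμ
  have hgap := fun ρ (hρ : tfAdmissible V ρ) =>
    integral_tfIntegrand_add_sq_le hVc hcoer hg hμ hρ
  have hsq_nonneg : ∀ ρ : E3 → ℝ, 0 ≤ ∫ x, (ρ x - T x) ^ 2 := fun ρ =>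
    integral_nonneg fun x => sq_nonneg _
  have hETF : ETF V g Ω = ∫ x, tfIntegrand V g Ω T x := by
    refine IsLeast.csInf_eq ⟨⟨T, hT, rfl⟩, ?_⟩
    rintro _ ⟨ρ, hρ, rfl⟩
    nlinarith [hgap ρ hρ, hsq_nonneg ρ]
  refine ⟨hT, hETF.symm, fun ρ hρ hE => ?_⟩
  refine ae_eq_of_integral_sub_sq_eq_zero (hρ.memLp_two.sub hT.memLp_two).integrable_sq ?_
  have := hgap ρ hρ
  rw [hE, hETF] at this
  nlinarith [hsq_nonneg ρ]

/-- **The 3D Thomas–Fermi functional attains its infimum at the explicit density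
`ρ^TF_{g,Ω}(x) = (1/(2g))[μ + (Ω²/4) r(x)² − V(x)]₊`**, where `μ` is the unique real
number normalizing `∫ ρ^TF = 1`; the minimizer is unique up to sets of measure zero. -/
theorem tf3_minimizer (V : E3 → ℝ) (hVc : Continuous V) (s : ℝ) (hs : 2 < s)
    (hhom : Homogeneous V s) (hVpos : ∀ x : E3, ‖x‖ = 1 → 0 < V x)
    (g Ω : ℝ) (hg : 0 < g) (hΩ : 0 ≤ Ω) :
    (∃! μ : ℝ, (∫ x, rhoTF V g Ω μ x) = 1) ∧
    ∀ μ : ℝ, (∫ x, rhoTF V g Ω μ x) = 1 →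
      tfAdmissible V (rhoTF V g Ω μ) ∧
      (∫ x, tfIntegrand V g Ω (rhoTF V g Ω μ) x) = ETF V g Ω ∧
      ∀ ρ : E3 → ℝ, tfAdmissible V ρ →
        (∫ x, tfIntegrand V g Ω ρ x) = ETF V g Ω →
          ∀ᵐ x : E3, ρ x = rhoTF V g Ω μ x :=
  tf3_minimizer_general V hVc s hs hhom hVpos g Ω hg
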